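/- Let G be a powerful finite p-group and e a positive integer. Then [G^e, G^e] ≤ (G^e)^{pe}, i.e. the subgroup R = G^e satisfies [R,R] ≤ R^{pe}. -/

import Mathlib

/-- The subgroup generated by the `n`-th powers of elements of `H`. -/
def powOf {G : Type} [Group G] (H : Subgroup G) (n : ℕ) : Subgroup G :=
  Subgroup.closure ((fun x => x ^ n) '' (H : Set G))

/-- A finite `p`-group `G` is powerful if `[G,G] ≤ G^p` for odd `p`, and `[G,G] ≤ G^4`
for `p = 2`. -/
def IsPowerful (G : Type) [Group G] (p : ℕ) : Prop :=
  if p = 2 then ⁅(⊤ : Subgroup G), (⊤ : Subgroup G)⁆ ≤ powOf ⊤ 4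
  else ⁅(⊤ : Subgroup G), (⊤ : Subgroup G)⁆ ≤ powOf ⊤ p

/-!
Write `e = p ^ k * u` with `p ∤ u`. In a `p`-group every element is a `u`-th power of one of
its own powers, so `G^e = ℧_k(G)` and `R^{pe} = ℧_k(G)^{p^{k+1}} ⊇ ℧_{2k+1}(G)`. It therefore
suffices to show `[℧_i(G), ℧_j(G)] ≤ ℧_{i+j+1}(G)`, which is proved together with
`℧_m(G)^p ≤ ℧_{m+1}(G)` by induction on `|G|`. If the target subgroup is nontrivial, it
contains a central subgroup of order `p`, and the claim lifts from the quotient by it. If the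
target is trivial, the induction hypothesis applied to all proper quotients shows that the
relevant commutators lie in every nontrivial normal subgroup, hence are central of exponent
`p`; then the expansion `[v, z^n] = [v, z]^n [z, [v, z]]^(n choose 2)` kills `[v, z^p]`
(`[v, z^4]` if `p = 2`).
-/

open Subgroup
open scoped commutatorElement

section powOf

variable {G : Type} [Group G]

theorem pow_mem_powOf {H : Subgroup G} {n : ℕ} {x : G} (hx : x ∈ H) : x ^ n ∈ powOf H n :=
  subset_closure ⟨x, hx, rfl⟩

theorem powOf_le_iff {H K : Subgroup G} {n : ℕ} : powOf H n ≤ K ↔ ∀ x ∈ H, x ^ n ∈ K := by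
  rw [powOf, closure_le, Set.image_subset_iff]
  rfl

theorem powOf_le_powOf_of_dvd {H : Subgroup G} {m n : ℕ} (h : m ∣ n) :
    powOf H n ≤ powOf H m := by
  obtain ⟨k, rfl⟩ := h
  refine powOf_le_iff.mpr fun x hx => ?_
  rw [mul_comm, pow_mul]
  exact pow_mem_powOf (pow_mem hx k)

theorem map_powOf {G' : Type} [Group G'] (f : G →* G') (H : Subgroup G) (n : ℕ) :
    (powOf H n).map f = powOf (H.map f) n := by
  rw [powOf, powOf, MonoidHom.map_closure, coe_map, Set.image_image, Set.image_image]
  simp only [map_pow]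

instance powOf_top_characteristic (n : ℕ) : (powOf (⊤ : Subgroup G) n).Characteristic :=
  characteristic_iff_map_le.mpr fun ϕ => by
    rw [map_powOf, map_top_of_surjective _ ϕ.surjective]

theorem commutator_powOf_eq_bot {H K : Subgroup G} {n : ℕ}
    (h : ∀ v ∈ H, ∀ z ∈ K, ⁅v, z ^ n⁆ = 1) : ⁅H, powOf K n⁆ = ⊥ := by
  rw [commutator_comm, commutator_eq_bot_iff_le_centralizer, powOf, closure_le]
  rintro _ ⟨z, hz, rfl⟩
  exact mem_centralizer_iff.mpr fun v hv =>
    (commutatorElement_eq_one_iff_commute.mp (h v hv z hz)).eq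

theorem IsPGroup.powOf_mul_of_not_dvd {p : ℕ} [Fact p.Prime] (hG : IsPGroup p G)
    (H : Subgroup G) (n : ℕ) {u : ℕ} (hu : ¬ p ∣ u) : powOf H (n * u) = powOf H n := by
  refine le_antisymm (powOf_le_powOf_of_dvd (dvd_mul_right n u))
    (powOf_le_iff.mpr fun x hx => ?_)
  obtain ⟨t, ht⟩ := IsPGroup.iff_orderOf.mp hG x
  have hcop : u.Coprime (orderOf x) :=
    ht ▸ (Nat.Coprime.pow_right t ((Nat.Prime.coprime_iff_not_dvd Fact.out).mpr hu).symm)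
  obtain ⟨m, hm⟩ := exists_pow_eq_self_of_coprime hcop
  rw [← hm, ← pow_mul, ← pow_mul, show u * (m * n) = m * (n * u) by ring, pow_mul]
  exact pow_mem_powOf (pow_mem hx m)

end powOf

theorem IsPowerful.map {G H : Type} [Group G] [Group H] {p : ℕ} (hG : IsPowerful G p)
    (f : G →* H) (hf : Function.Surjective f) : IsPowerful H p := by
  unfold IsPowerful at *
  split_ifs at hG ⊢ <;>
  · have h := map_mono (f := f) hG
    rwa [map_commutator, map_powOf, map_top_of_surjective f hf] at h

section agemo

variable {p : ℕ} {G : Type} [Group G]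

variable (p G) in
/-- `agemo p G m` is `℧_m(G) = G^{p^m}`. -/
def agemo (m : ℕ) : Subgroup G := powOf ⊤ (p ^ m)

instance (m : ℕ) : (agemo p G m).Normal := inferInstanceAs (powOf ⊤ (p ^ m)).Normal

theorem pow_mem_agemo (x : G) (m : ℕ) : x ^ p ^ m ∈ agemo p G m :=
  pow_mem_powOf (mem_top x)

theorem agemo_zero : agemo p G 0 = ⊤ :=
  eq_top_iff.mpr fun x _ => by simpa using pow_mem_agemo (p := p) x 0

theorem mem_agemo_zero (x : G) : x ∈ agemo p G 0 :=
  (agemo_zero (p := p) (G := G)) ▸ mem_top x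

theorem agemo_antitone : Antitone (agemo p G) := fun _ _ h =>
  powOf_le_powOf_of_dvd (pow_dvd_pow p h)

theorem agemo_add_le_powOf (a b : ℕ) : agemo p G (a + b) ≤ powOf (agemo p G a) (p ^ b) :=
  powOf_le_iff.mpr fun x _ => by
    rw [pow_add, pow_mul]
    exact pow_mem_powOf (pow_mem_agemo x a)

theorem map_agemo {H : Type} [Group H] (f : G →* H) (hf : Function.Surjective f) (m : ℕ) :
    (agemo p G m).map f = agemo p H m := by
  rw [agemo, agemo, map_powOf, map_top_of_surjective f hf]

theorem IsPowerful.commutator_top_le_agemo_two (h : IsPowerful G 2) :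
    ⁅(⊤ : Subgroup G), ⊤⁆ ≤ agemo 2 G 2 := by
  simpa [IsPowerful, agemo] using h

theorem IsPowerful.commutator_top_le_agemo_one (h : IsPowerful G p) :
    ⁅(⊤ : Subgroup G), ⊤⁆ ≤ agemo p G 1 := by
  by_cases hp : p = 2
  · subst hp
    exact h.commutator_top_le_agemo_two.trans (agemo_antitone (by norm_num))
  · simpa [IsPowerful, hp, agemo] using h

end agemo

section properQuotients

variable {p : ℕ} {G : Type} [Group G]

theorem normal_of_le_center {N : Subgroup G} (h : N ≤ center G) : N.Normal :=
  ⟨fun n hn g => by rwa [mem_center_iff.mp (h hn) g, mul_inv_cancel_right]⟩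

theorem IsPGroup.prime_dvd_card [Finite G] [Fact p.Prime] [Nontrivial G] (hG : IsPGroup p G) :
    p ∣ Nat.card G := by
  obtain ⟨n, hn, hcard⟩ := hG.nontrivial_iff_card.mp ‹_›
  exact hcard ▸ dvd_pow_self p hn.ne'

theorem IsPGroup.exists_ne_bot_le_inf_center [Finite G] [Fact p.Prime] (hG : IsPGroup p G)
    {K : Subgroup G} [K.Normal] (hK : K ≠ ⊥) :
    ∃ N : Subgroup G, N ≠ ⊥ ∧ N ≤ K ⊓ center G ∧ ∀ x ∈ N, x ^ p = 1 := by
  have : Nontrivial K := (nontrivial_iff_ne_bot K).mpr hK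
  have hKp := (hG.to_subgroup K).prime_dvd_card
  -- `G` acts on `K` by conjugation; since `p ∣ |K|` and `1` is fixed, so is some `b ≠ 1`.
  obtain ⟨b, hb, hb1⟩ := (hG.of_equiv ConjAct.toConjAct)
    |>.exists_fixed_point_of_prime_dvd_card_of_fixed_point K hKp (a := 1) fun g => smul_one g
  have hbcenter : (b : G) ∈ K ⊓ center G := by
    refine ⟨b.2, mem_center_iff.mpr fun g => ?_⟩
    have := congrArg Subtype.val (hb (ConjAct.toConjAct g))
    rw [ConjAct.Subgroup.val_conj_smul, ConjAct.smul_def, ConjAct.ofConjAct_toConjAct] at this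
    exact (mul_inv_eq_iff_eq_mul.mp this)
  have : Nontrivial (K ⊓ center G : Subgroup G) :=
    ⟨⟨⟨b, hbcenter⟩, 1, fun h => hb1 (Subtype.ext (congrArg Subtype.val h).symm)⟩⟩
  obtain ⟨a, ha⟩ := exists_prime_orderOf_dvd_card' p (hG.to_subgroup (K ⊓ center G)).prime_dvd_card
  refine ⟨zpowers (a : G), ?_, zpowers_le.mpr a.2, fun x hx => ?_⟩
  · rw [Ne, zpowers_eq_bot, ← orderOf_eq_one_iff, orderOf_coe, ha]
    exact (Fact.out : p.Prime).ne_one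
  · obtain ⟨k, rfl⟩ := mem_zpowers_iff.mp hx
    rw [← zpow_natCast, ← zpow_mul, mul_comm, zpow_mul, zpow_natCast, ← ha, ← orderOf_coe,
      pow_orderOf_eq_one, one_zpow]

variable (G) in
/-- `A ≤ B` holds in every quotient `G ⧸ N` by a nontrivial normal subgroup `N`. -/
def LeInProperQuotients (A B : Subgroup G) : Prop :=
  ∀ N : Subgroup G, N.Normal → N ≠ ⊥ → A ≤ B ⊔ N

variable {A B : Subgroup G}

theorem leInProperQuotients_of_map_le
    (h : ∀ N : Subgroup G, [N.Normal] → N ≠ ⊥ →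
      A.map (QuotientGroup.mk' N) ≤ B.map (QuotientGroup.mk' N)) :
    LeInProperQuotients G A B := fun N _ hN => by
  simpa [Subgroup.map_le_map_iff] using h N hN

theorem LeInProperQuotients.mono_right {B' : Subgroup G} (h : LeInProperQuotients G A B)
    (hB : B ≤ B') : LeInProperQuotients G A B' := fun N hN hN' =>
  (h N hN hN').trans (sup_le_sup_right hB N)

theorem LeInProperQuotients.le [Finite G] [Fact p.Prime] (hG : IsPGroup p G)
    (h : LeInProperQuotients G A B) [B.Normal] (hB : B ≠ ⊥) : A ≤ B := by
  obtain ⟨N, hN, hNB, -⟩ := hG.exists_ne_bot_le_inf_center hB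
  simpa [sup_eq_left.mpr (hNB.trans inf_le_left)] using
    h N (normal_of_le_center (hNB.trans inf_le_right)) hN

theorem LeInProperQuotients.central [Finite G] [Fact p.Prime] (hG : IsPGroup p G)
    {K : Subgroup G} [K.Normal] (h : LeInProperQuotients G K ⊥) {x : G} (hx : x ∈ K) :
    x ∈ center G ∧ x ^ p = 1 := by
  by_cases hK : K = ⊥
  · subst hK
    rw [mem_bot.mp hx]
    exact ⟨one_mem _, one_pow p⟩
  obtain ⟨N, hN, hNK, hNp⟩ := hG.exists_ne_bot_le_inf_center hK
  have hxN : x ∈ N := by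
    simpa using h N (normal_of_le_center (hNK.trans inf_le_right)) hN hx
  exact ⟨(hNK.trans inf_le_right) hxN, hNp x hxN⟩

end properQuotients

section commutator

variable {G : Type} [Group G]

theorem commutatorElement_pow_right {v z : G} (h : ⁅z, ⁅v, z⁆⁆ ∈ center G) (n : ℕ) :
    ⁅v, z ^ n⁆ = ⁅v, z⁆ ^ n * ⁅z, ⁅v, z⁆⁆ ^ n.choose 2 := by
  set c := ⁅v, z⁆
  set ε := ⁅z, c⁆
  have hε : ∀ g, Commute ε g := fun g => (mem_center_iff.mp h g).symm
  have hconj : z * c * z⁻¹ = ε * c := by simp only [ε, commutatorElement_def]; group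
  induction n with
  | zero => simp [commutatorElement_def]
  | succ n ih =>
    calc ⁅v, z ^ (n + 1)⁆ = c * (z * ⁅v, z ^ n⁆ * z⁻¹) := by
          simp only [c, commutatorElement_def]; group
      _ = c * ((z * c * z⁻¹) ^ n * ε ^ n.choose 2) := by
          have hεz : z * ε ^ n.choose 2 * z⁻¹ = ε ^ n.choose 2 := by
            rw [← ((hε z).pow_left _).eq, mul_inv_cancel_right]
          rw [ih, conj_pow]
          conv_rhs => rw [← hεz]
          group
      _ = c ^ (n + 1) * ε ^ (n + 1).choose 2 := by
          rw [hconj, (hε c).mul_pow, ((hε c).pow_pow n n).eq, Nat.choose_succ_succ,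
            Nat.choose_one_right, pow_add, pow_succ']
          group

theorem commutatorElement_pow_eq_one {v z : G} {n q : ℕ} (h : ⁅z, ⁅v, z⁆⁆ ∈ center G)
    (hq : ⁅z, ⁅v, z⁆⁆ ^ q = 1) (hqn : q ∣ n.choose 2) (hc : ⁅v, z⁆ ^ n = 1) :
    ⁅v, z ^ n⁆ = 1 := by
  obtain ⟨r, hr⟩ := hqn
  rw [commutatorElement_pow_right h, hc, hr, pow_mul, hq, one_pow, one_mul]


theorem commutator_powOf_eq_bot_of_central {H K : Subgroup G} {n q : ℕ} (hqn : q ∣ n.choose 2)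
    (h : ∀ v ∈ H, ∀ z ∈ K,
      ⁅z, ⁅v, z⁆⁆ ∈ center G ∧ ⁅z, ⁅v, z⁆⁆ ^ q = 1 ∧ ⁅v, z⁆ ^ n = 1) :
    ⁅H, powOf K n⁆ = ⊥ :=
  commutator_powOf_eq_bot fun v hv z hz =>
    let ⟨hcenter, hq, hc⟩ := h v hv z hz
    commutatorElement_pow_eq_one hcenter hq hqn hc

theorem pow_eq_one_of_mem_closure {S : Set G} {n : ℕ} (hcomm : ⁅closure S, closure S⁆ = ⊥)
    (hS : ∀ s ∈ S, s ^ n = 1) {y : G} (hy : y ∈ closure S) : y ^ n = 1 := by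
  induction hy using closure_induction with
  | mem s hs => exact hS s hs
  | one => exact one_pow n
  | mul x y hx hy ihx ihy =>
    have hxy : Commute x y := commutatorElement_eq_one_iff_commute.mp <|
      mem_bot.mp (hcomm ▸ commutator_mem_commutator hx hy)
    rw [hxy.mul_pow, ihx, ihy, one_mul]
  | inv x _ ihx => rw [inv_pow, ihx, inv_one]

end commutator

section filtration

variable (p : ℕ) (G : Type) [Group G]

def AgemoPowLe : Prop := ∀ m, powOf (agemo p G m) p ≤ agemo p G (m + 1)

def AgemoCommutatorLe : Prop := ∀ i j, ⁅agemo p G i, agemo p G j⁆ ≤ agemo p G (i + j + 1)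

variable {p G}

theorem AgemoPowLe.pow_pow_mem (h : AgemoPowLe p G) {m : ℕ} {c : G} (hc : c ∈ agemo p G m)
    (b : ℕ) : c ^ p ^ b ∈ agemo p G (m + b) := by
  induction b with
  | zero => simpa using hc
  | succ b ih => rw [pow_succ, pow_mul]; exact h (m + b) (pow_mem_powOf ih)

theorem AgemoPowLe.pow_eq_one (h : AgemoPowLe p G) {m : ℕ} (hbot : agemo p G (m + 1) = ⊥)
    {c : G} (hc : c ∈ agemo p G m) : c ^ p = 1 :=
  mem_bot.mp (hbot ▸ h m (pow_mem_powOf hc))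

theorem AgemoPowLe.map_le_map {H : Type} [Group H] (h : AgemoPowLe p H) (f : G →* H)
    (hf : Function.Surjective f) (m : ℕ) :
    (powOf (agemo p G m) p).map f ≤ (agemo p G (m + 1)).map f := by
  rw [map_powOf, map_agemo f hf, map_agemo f hf]
  exact h m

theorem AgemoCommutatorLe.map_le_map {H : Type} [Group H] (h : AgemoCommutatorLe p H) (f : G →* H)
    (hf : Function.Surjective f) (i j : ℕ) :
    ⁅agemo p G i, agemo p G j⁆.map f ≤ (agemo p G (i + j + 1)).map f := by
  rw [map_commutator, map_agemo f hf, map_agemo f hf, map_agemo f hf]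
  exact h i j

theorem commutator_agemo_zero_add_eq_bot (hPG : AgemoPowLe p G) {n b : ℕ}
    (hbot : agemo p G (n + b + 1) = ⊥) (hc : ⁅agemo p G 0, agemo p G n⁆ ≤ agemo p G (n + 1))
    (hε : ∀ v : G, ∀ z ∈ agemo p G n, ⁅z, ⁅v, z⁆⁆ ∈ center G ∧ ⁅z, ⁅v, z⁆⁆ ^ p = 1)
    (hp : p ∣ (p ^ b).choose 2) : ⁅agemo p G 0, agemo p G (n + b)⁆ = ⊥ := by
  refine eq_bot_iff.mpr ((commutator_mono le_rfl (agemo_add_le_powOf n b)).trans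
    (commutator_powOf_eq_bot_of_central hp fun v hv z hz => ?_).le)
  have hcpow := hPG.pow_pow_mem (hc (commutator_mem_commutator hv hz)) b
  rw [add_right_comm, hbot] at hcpow
  exact ⟨(hε v z hz).1, (hε v z hz).2, mem_bot.mp hcpow⟩

theorem commutator_agemo_succ_eq_bot (hPG : AgemoPowLe p G) {m i j : ℕ}
    (hbot : agemo p G (m + 1) = ⊥) (h0 : ⁅agemo p G 0, agemo p G m⁆ ≤ agemo p G (m + 1))
    (hij : ⁅agemo p G i, agemo p G j⁆ ≤ agemo p G m) :
    ⁅agemo p G i, agemo p G (j + 1)⁆ = ⊥ := by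
  refine eq_bot_iff.mpr ((commutator_mono le_rfl (agemo_add_le_powOf j 1)).trans ?_)
  rw [pow_one, commutator_powOf_eq_bot_of_central (one_dvd _)]
  intro v hv z hz
  have hc := hij (commutator_mem_commutator hv hz)
  have hε : ⁅z, ⁅v, z⁆⁆ = 1 :=
    mem_bot.mp (hbot ▸ h0 (commutator_mem_commutator (mem_agemo_zero z) hc))
  simp [hε, hPG.pow_eq_one hbot hc]

end filtration

section step

variable {p : ℕ} [Fact p.Prime] {G : Type} [Group G] [Finite G]

theorem central_of_mem_commutator_agemo (hG : IsPGroup p G)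
    (hM : ∀ i j, LeInProperQuotients G ⁅agemo p G i, agemo p G j⁆ (agemo p G (i + j + 1)))
    {m i j : ℕ} (hbot : agemo p G (m + 1) = ⊥) (hij : m ≤ i + j) {x : G}
    (hx : x ∈ ⁅agemo p G i, agemo p G j⁆) : x ∈ center G ∧ x ^ p = 1 :=
  ((hM i j).mono_right (hbot ▸ agemo_antitone (by omega))).central hG hx

theorem commutator_agemo_succ_self_eq_bot (hG : IsPGroup p G)
    (hM : ∀ i j, LeInProperQuotients G ⁅agemo p G i, agemo p G j⁆ (agemo p G (i + j + 1)))
    {m : ℕ} (hbot : agemo p G (m + 2) = ⊥) :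
    ⁅agemo p G (m + 1), agemo p G (m + 1)⁆ = ⊥ := by
  refine eq_bot_iff.mpr ((commutator_mono le_rfl (agemo_add_le_powOf m 1)).trans ?_)
  rw [pow_one, commutator_powOf_eq_bot_of_central (one_dvd _)]
  intro v hv z hz
  obtain ⟨hc, hcp⟩ := central_of_mem_commutator_agemo hG hM hbot (by omega)
    (commutator_mem_commutator hv hz)
  have hε : ⁅z, ⁅v, z⁆⁆ = 1 :=
    commutatorElement_eq_one_iff_commute.mpr (mem_center_iff.mp hc z)
  simp [hε, hcp]

theorem AgemoPowLe.of_leInProperQuotients (hG : IsPGroup p G)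
    (hP : ∀ m, LeInProperQuotients G (powOf (agemo p G m) p) (agemo p G (m + 1)))
    (hM : ∀ i j, LeInProperQuotients G ⁅agemo p G i, agemo p G j⁆ (agemo p G (i + j + 1))) :
    AgemoPowLe p G := by
  rintro (_ | m)
  · rw [agemo_zero]
    exact powOf_le_iff.mpr fun x _ => by simpa using pow_mem_agemo (p := p) x 1
  by_cases hbot : agemo p G (m + 2) = ⊥
  · refine powOf_le_iff.mpr fun y hy => hbot ▸ mem_bot.mpr ?_
    refine pow_eq_one_of_mem_closure (commutator_agemo_succ_self_eq_bot hG hM hbot) ?_ hy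
    rintro _ ⟨x, -, rfl⟩
    rw [← mem_bot, ← hbot, ← pow_mul, ← pow_succ]
    exact pow_mem_agemo x (m + 2)
  · exact (hP (m + 1)).le hG hbot

theorem commutator_agemo_zero_two_eq_bot (hG : IsPGroup 2 G)
    (hM : ∀ i j, LeInProperQuotients G ⁅agemo 2 G i, agemo 2 G j⁆ (agemo 2 G (i + j + 1)))
    (hpow : IsPowerful G 2) (hPG : AgemoPowLe 2 G) {n : ℕ} (hbot : agemo 2 G (n + 3) = ⊥)
    (IH : ∀ k ≤ n + 1, ⁅agemo 2 G 0, agemo 2 G k⁆ ≤ agemo 2 G (k + 1)) :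
    ⁅agemo 2 G 0, agemo 2 G (n + 2)⁆ = ⊥ := by
  refine commutator_agemo_zero_add_eq_bot hPG hbot (IH n (by omega)) (fun v z hz => ?_)
    (by decide)
  rcases n with _ | n
  · have hc := hpow.commutator_top_le_agemo_two
      (commutator_mem_commutator (mem_top v) (mem_top z))
    exact central_of_mem_commutator_agemo hG hM hbot le_rfl
      (commutator_mem_commutator (mem_agemo_zero z) hc)
  · have hc := IH (n + 1) (by omega) (commutator_mem_commutator (mem_agemo_zero v) hz)
    exact central_of_mem_commutator_agemo hG hM hbot (by omega) (commutator_mem_commutator hz hc)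

theorem commutator_agemo_zero_le (hG : IsPGroup p G)
    (hM : ∀ i j, LeInProperQuotients G ⁅agemo p G i, agemo p G j⁆ (agemo p G (i + j + 1)))
    (hpow : IsPowerful G p) (hPG : AgemoPowLe p G) {m : ℕ}
    (IH : ∀ k < m, ⁅agemo p G 0, agemo p G k⁆ ≤ agemo p G (k + 1)) :
    ⁅agemo p G 0, agemo p G m⁆ ≤ agemo p G (m + 1) := by
  rcases m with _ | n
  · rw [agemo_zero]
    exact hpow.commutator_top_le_agemo_one
  by_cases hbot : agemo p G (n + 2) = ⊥
  swap
  · have h := hM 0 (n + 1)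
    rw [zero_add] at h
    exact h.le hG hbot
  rw [hbot, le_bot_iff]
  by_cases hp2 : p = 2
  · subst hp2
    rcases n with _ | n
    · exact eq_bot_iff.mpr (hbot ▸ (commutator_mono le_top le_top).trans
        hpow.commutator_top_le_agemo_two)
    · exact commutator_agemo_zero_two_eq_bot hG hM hpow hPG hbot fun k hk => IH k (by omega)
  have hc := IH n (by omega)
  refine commutator_agemo_zero_add_eq_bot hPG (b := 1) hbot hc (fun v z hz => ?_) ?_
  · exact central_of_mem_commutator_agemo hG hM hbot (by omega)
      (commutator_mem_commutator hz (hc (commutator_mem_commutator (mem_agemo_zero v) hz)))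
  · have hp : p.Prime := Fact.out
    rw [pow_one]
    exact hp.dvd_choose_self two_ne_zero (lt_of_le_of_ne hp.two_le (Ne.symm hp2))

theorem AgemoCommutatorLe.of_leInProperQuotients (hG : IsPGroup p G)
    (hM : ∀ i j, LeInProperQuotients G ⁅agemo p G i, agemo p G j⁆ (agemo p G (i + j + 1)))
    (hpow : IsPowerful G p) (hPG : AgemoPowLe p G) : AgemoCommutatorLe p G := by
  suffices h : ∀ m i j, i + j = m → ⁅agemo p G i, agemo p G j⁆ ≤ agemo p G (m + 1) from
    fun i j => h _ i j rfl
  intro m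
  induction m using Nat.strong_induction_on with
  | _ m IH =>
  rintro i j rfl
  have h0 := commutator_agemo_zero_le hG hM hpow hPG fun k hk => IH k hk 0 k (zero_add k)
  by_cases hbot : agemo p G (i + j + 1) = ⊥
  swap
  · exact (hM i j).le hG hbot
  rcases j with _ | j
  · rw [commutator_comm]
    exact h0
  · have hij := IH (i + j) (by omega) i j rfl
    rw [hbot]
    exact (commutator_agemo_succ_eq_bot hPG hbot h0 hij).le

end step

theorem card_quotient_lt_card {G : Type} [Group G] [Finite G] {N : Subgroup G} [N.Normal]
    (hN : N ≠ ⊥) : Nat.card (G ⧸ N) < Nat.card G := by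
  rw [← index_eq_card, ← N.index_mul_card]
  exact lt_mul_of_one_lt_right (Nat.pos_of_ne_zero index_ne_zero_of_finite)
    (N.one_lt_card_iff_ne_bot.mpr hN)

theorem IsPowerful.agemoPowLe_and_agemoCommutatorLe {p : ℕ} [Fact p.Prime] {G : Type}
    [Group G] [Finite G] (hG : IsPGroup p G) (hpow : IsPowerful G p) :
    AgemoPowLe p G ∧ AgemoCommutatorLe p G := by
  induction hn : Nat.card G using Nat.strong_induction_on generalizing G with
  | _ n IH =>
  have hquot (N : Subgroup G) [N.Normal] (hN : N ≠ ⊥) :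
      AgemoPowLe p (G ⧸ N) ∧ AgemoCommutatorLe p (G ⧸ N) :=
    IH _ (hn ▸ card_quotient_lt_card hN) (hG.to_quotient N)
      (hpow.map _ (QuotientGroup.mk'_surjective N)) rfl
  have hM i j := leInProperQuotients_of_map_le fun N _ hN =>
    (hquot N hN).2.map_le_map _ (QuotientGroup.mk'_surjective N) i j
  have hPG := AgemoPowLe.of_leInProperQuotients hG
    (fun m => leInProperQuotients_of_map_le fun N _ hN =>
      (hquot N hN).1.map_le_map _ (QuotientGroup.mk'_surjective N) m) hM
  exact ⟨hPG, .of_leInProperQuotients hG hM hpow hPG⟩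

/-- if `G` is a powerful finite `p`-group and `e` a positive integer, then
`R = G^e` satisfies `[R, R] ≤ R^{pe}`. -/
theorem powerful_power_subgroup_commutator
    (p : ℕ) (hp : p.Prime) (G : Type) [Group G] [Finite G]
    (hG : IsPGroup p G) (hpow : IsPowerful G p)
    (e : ℕ) (he : 0 < e) :
    ⁅powOf (⊤ : Subgroup G) e, powOf (⊤ : Subgroup G) e⁆ ≤
      powOf (powOf (⊤ : Subgroup G) e) (p * e) := by
  have := Fact.mk hp
  obtain ⟨k, u, hu, rfl⟩ := Nat.exists_eq_pow_mul_and_not_dvd he.ne' p hp.ne_one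
  have hR : powOf ⊤ (p ^ k * u) = agemo p G k := hG.powOf_mul_of_not_dvd ⊤ _ hu
  rw [hR, ← mul_assoc, ← pow_succ', hG.powOf_mul_of_not_dvd _ _ hu]
  exact ((hpow.agemoPowLe_and_agemoCommutatorLe hG).2 k k).trans (agemo_add_le_powOf k (k + 1))
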